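/- The n-dimensional complex algebra with basis e_1,...,e_n and products [e_i, e_j] = C(i+j−1, j) e_{i+j} for 2 ≤ i+j ≤ n (and [e_i,e_j] = 0 when i+j > n), where C(m,k) denotes the binomial coefficient, is a Zinbiel algebra, and its lower central series satisfies Z^k = span{e_k, ..., e_n} for 2 ≤ k ≤ n. -/

import Mathlib

/-- Standard basis vectors of `ℂⁿ` (0-indexed: `e n i` is `e_{i+1}`). -/
noncomputable def e (n : ℕ) (i : Fin n) : Fin n → ℂ := Pi.single i 1

/-- Lower central series: `lcs b 0 = Z = Z¹`, `lcs b k = Z^{k+1} = [Z, Z^k]`. -/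
def lcs {F : Type*} [Field F] {Z : Type*} [AddCommGroup Z] [Module F Z]
    (b : Z →ₗ[F] Z →ₗ[F] Z) : ℕ → Submodule F Z
  | 0 => ⊤
  | k + 1 => Submodule.span F {w | ∃ x : Z, ∃ y ∈ lcs b k, w = b x y}

lemma natkey (i j k : ℕ) :
    (i+j+1).choose (j+1) * (i+j+k+2).choose (k+1) =
    (i+j+k+2).choose (j+k+2) * ((j+k+1).choose (k+1) + (j+k+1).choose (j+1)) := by
  have h1 := Nat.choose_mul (n := i+j+k+2) (k := j+k+2) (s := k+1) (by omega)
  have e1 : i+j+k+2-(k+1) = i+j+1 := by omega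
  have e2 : j+k+2-(k+1) = j+1 := by omega
  rw [e1, e2] at h1
  have h2 : (j+k+1).choose k = (j+k+1).choose (j+1) := by
    rw [← Nat.choose_symm (show j+1 ≤ j+k+1 by omega)]
    congr 1; omega
  have h3 : (j+k+2).choose (k+1) = (j+k+1).choose k + (j+k+1).choose (k+1) :=
    Nat.choose_succ_succ _ _
  calc (i+j+1).choose (j+1) * (i+j+k+2).choose (k+1)
      = (i+j+k+2).choose (j+k+2) * (j+k+2).choose (k+1) := by rw [h1]; ring
    _ = _ := by rw [h3, h2]; ring

lemma natkey2 (i j k : ℕ) :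
    (i+j+1).choose (j+1) * (i+j+1+k+1).choose (k+1) =
    (j+k+1).choose (k+1) * (i+(j+k+1)+1).choose (j+k+1+1) +
    (k+j+1).choose (j+1) * (i+(k+j+1)+1).choose (k+j+1+1) := by
  have h := natkey i j k
  have e4 : k+j+1 = j+k+1 := by omega
  have e1 : i+j+1+k+1 = i+j+k+2 := by omega
  have e2 : i+(j+k+1)+1 = i+j+k+2 := by omega
  have e3 : j+k+1+1 = j+k+2 := by omega
  rw [e4, e1, e2, e3]
  linear_combination h

section main

variable (n : ℕ) (b : (Fin n → ℂ) →ₗ[ℂ] (Fin n → ℂ) →ₗ[ℂ] (Fin n → ℂ))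

lemma key (htable : ∀ i j : Fin n, b (e n i) (e n j) =
      if h : (i : ℕ) + (j : ℕ) + 2 ≤ n then
        ((Nat.choose ((i : ℕ) + (j : ℕ) + 1) ((j : ℕ) + 1) : ℂ)) •
          e n ⟨(i : ℕ) + (j : ℕ) + 1, Nat.lt_of_lt_of_le (Nat.lt_succ_self _) (by omega)⟩
      else 0) :
    ∀ i j k : Fin n, b (b (e n i) (e n j)) (e n k)
      = b (e n i) (b (e n j) (e n k)) + b (e n i) (b (e n k) (e n j)) := by
  intro i j k
  by_cases h3 : (i:ℕ)+(j:ℕ)+(k:ℕ)+3 ≤ n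
  · have hij : (i:ℕ)+(j:ℕ)+2 ≤ n := by omega
    have hjk : (j:ℕ)+(k:ℕ)+2 ≤ n := by omega
    have hkj : (k:ℕ)+(j:ℕ)+2 ≤ n := by omega
    rw [htable i j, dif_pos hij, htable j k, dif_pos hjk, htable k j, dif_pos hkj,
        map_smul, LinearMap.smul_apply, map_smul, map_smul, htable, htable, htable]
    have hA : (i:ℕ)+(j:ℕ)+1+(k:ℕ)+2 ≤ n := by omega
    have hB : (i:ℕ)+((j:ℕ)+(k:ℕ)+1)+2 ≤ n := by omega
    have hC : (i:ℕ)+((k:ℕ)+(j:ℕ)+1)+2 ≤ n := by omega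
    simp only [Fin.val_mk, dif_pos hA, dif_pos hB, dif_pos hC, smul_smul]
    have hfin : ∀ (v : ℕ) (h : v < n) (h' : (i:ℕ)+(j:ℕ)+(k:ℕ)+2 < n), v = (i:ℕ)+(j:ℕ)+(k:ℕ)+2 →
        e n ⟨v, h⟩ = e n ⟨(i:ℕ)+(j:ℕ)+(k:ℕ)+2, h'⟩ := by
      intro v h h' hv; subst hv; rfl
    rw [hfin _ _ (by omega) (by omega), hfin ((i:ℕ)+((j:ℕ)+(k:ℕ)+1)+1) _ (by omega) (by omega),
        hfin ((i:ℕ)+((k:ℕ)+(j:ℕ)+1)+1) _ (by omega) (by omega), ← add_smul]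
    congr 1
    exact_mod_cast natkey2 i j k
  · have hA : ¬((i:ℕ)+(j:ℕ)+1+(k:ℕ)+2 ≤ n) := by omega
    have hB : ¬((i:ℕ)+((j:ℕ)+(k:ℕ)+1)+2 ≤ n) := by omega
    have hC : ¬((i:ℕ)+((k:ℕ)+(j:ℕ)+1)+2 ≤ n) := by omega
    rw [htable i j, htable j k, htable k j]
    split_ifs <;>
      simp [map_smul, LinearMap.smul_apply, htable, Fin.val_mk, dif_neg hA, dif_neg hB, dif_neg hC]

lemma zinbiel (htable : ∀ i j : Fin n, b (e n i) (e n j) =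
      if h : (i : ℕ) + (j : ℕ) + 2 ≤ n then
        ((Nat.choose ((i : ℕ) + (j : ℕ) + 1) ((j : ℕ) + 1) : ℂ)) •
          e n ⟨(i : ℕ) + (j : ℕ) + 1, Nat.lt_of_lt_of_le (Nat.lt_succ_self _) (by omega)⟩
      else 0) :
    ∀ x y z : Fin n → ℂ, b (b x y) z = b x (b y z) + b x (b z y) := by
  have hk := key n b htable
  have hA : ∀ (x : Fin n → ℂ) (j k : Fin n), b (b x (e n j)) (e n k)
      = b x (b (e n j) (e n k)) + b x (b (e n k) (e n j)) := by
    intro x j k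
    have hfg : ((b.flip (e n k)) ∘ₗ (b.flip (e n j)))
        = b.flip (b (e n j) (e n k)) + b.flip (b (e n k) (e n j)) := by
      apply (Pi.basisFun ℂ (Fin n)).ext
      intro i
      simp only [Pi.basisFun_apply, LinearMap.comp_apply, LinearMap.flip_apply,
        LinearMap.add_apply]
      exact hk i j k
    have := LinearMap.congr_fun hfg x
    simpa using this
  have hB : ∀ (x y : Fin n → ℂ) (k : Fin n), b (b x y) (e n k)
      = b x (b y (e n k)) + b x (b (e n k) y) := by
    intro x y k
    have hfg : ((b.flip (e n k)) ∘ₗ (b x))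
        = (b x) ∘ₗ (b.flip (e n k)) + (b x) ∘ₗ (b (e n k)) := by
      apply (Pi.basisFun ℂ (Fin n)).ext
      intro j
      simp only [Pi.basisFun_apply, LinearMap.comp_apply, LinearMap.flip_apply,
        LinearMap.add_apply]
      exact hA x j k
    have := LinearMap.congr_fun hfg y
    simpa using this
  intro x y z
  have hfg : (b (b x y)) = (b x) ∘ₗ (b y) + (b x) ∘ₗ (b.flip y) := by
    apply (Pi.basisFun ℂ (Fin n)).ext
    intro k
    simp only [Pi.basisFun_apply, LinearMap.comp_apply, LinearMap.flip_apply,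
      LinearMap.add_apply]
    exact hB x y k
  have := LinearMap.congr_fun hfg z
  simpa using this

lemma span_T_one : Submodule.span ℂ {w | ∃ i : Fin n, 1 ≤ (i : ℕ) + 1 ∧ w = e n i} = ⊤ := by
  have hset : {w | ∃ i : Fin n, 1 ≤ (i : ℕ) + 1 ∧ w = e n i} = Set.range (Pi.basisFun ℂ (Fin n)) := by
    ext w
    constructor
    · rintro ⟨i, -, rfl⟩; exact ⟨i, by simp [e]⟩
    · rintro ⟨i, rfl⟩; exact ⟨i, by omega, by simp [e]⟩
  rw [hset]
  exact Module.Basis.span_eq _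

lemma step_lemma (htable : ∀ i j : Fin n, b (e n i) (e n j) =
      if h : (i : ℕ) + (j : ℕ) + 2 ≤ n then
        ((Nat.choose ((i : ℕ) + (j : ℕ) + 1) ((j : ℕ) + 1) : ℂ)) •
          e n ⟨(i : ℕ) + (j : ℕ) + 1, Nat.lt_of_lt_of_le (Nat.lt_succ_self _) (by omega)⟩
      else 0) (m : ℕ) :
    Submodule.span ℂ {w | ∃ x : Fin n → ℂ,
        ∃ y ∈ Submodule.span ℂ {w | ∃ i : Fin n, m + 1 ≤ (i : ℕ) + 1 ∧ w = e n i}, w = b x y}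
      = Submodule.span ℂ {w | ∃ i : Fin n, m + 2 ≤ (i : ℕ) + 1 ∧ w = e n i} := by
  apply le_antisymm
  · rw [Submodule.span_le]
    rintro w ⟨x, y, hy, rfl⟩
    induction hy using Submodule.span_induction with
    | mem y hy =>
      obtain ⟨j, hj, rfl⟩ := hy
      have hxtop : x ∈ Submodule.span ℂ (Set.range (Pi.basisFun ℂ (Fin n))) := by
        rw [Module.Basis.span_eq]; trivial
      induction hxtop using Submodule.span_induction with
      | mem x hx =>
        obtain ⟨i, rfl⟩ := hx
        rw [show (Pi.basisFun ℂ (Fin n)) i = e n i by simp [e], htable]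
        split_ifs with h
        · exact Submodule.smul_mem _ _ (Submodule.subset_span ⟨⟨(i:ℕ)+(j:ℕ)+1, by omega⟩,
            by simp [Fin.val_mk]; omega, rfl⟩)
        · exact Submodule.zero_mem _
      | zero => simp only [map_zero, LinearMap.zero_apply]; exact Submodule.zero_mem _
      | add u v hu hv hu' hv' =>
        simp only [map_add, LinearMap.add_apply]; exact Submodule.add_mem _ hu' hv'
      | smul c u hu hu' =>
        simp only [map_smul, LinearMap.smul_apply]; exact Submodule.smul_mem _ _ hu'
    | zero => simp only [map_zero]; exact Submodule.zero_mem _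
    | add u v hu hv hu' hv' => simp only [map_add]; exact Submodule.add_mem _ hu' hv'
    | smul c u hu hu' => simp only [map_smul]; exact Submodule.smul_mem _ _ hu'
  · rw [Submodule.span_le]
    rintro w ⟨i, hi, rfl⟩
    have hn : 0 < n := Nat.lt_of_le_of_lt (Nat.zero_le _) i.2
    have hipos : 1 ≤ (i : ℕ) := by omega
    set z : Fin n := ⟨0, hn⟩ with hz
    set j : Fin n := ⟨(i : ℕ) - 1, by omega⟩ with hjdef
    have hbe : b (e n z) (e n j) = e n i := by
      rw [htable]
      have hcond : (z : ℕ) + (j : ℕ) + 2 ≤ n := by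
        simp only [hz, hjdef, Fin.val_mk]; omega
      rw [dif_pos hcond]
      have h1 : (z : ℕ) + (j : ℕ) + 1 = (i : ℕ) := by
        simp only [hz, hjdef, Fin.val_mk]; omega
      have h2 : ((z : ℕ) + (j : ℕ) + 1).choose ((j : ℕ) + 1) = 1 := by
        rw [h1]
        have : (j : ℕ) + 1 = (i : ℕ) := by simp only [hjdef, Fin.val_mk]; omega
        rw [this, Nat.choose_self]
      rw [h2]
      have h3 : (⟨(z : ℕ) + (j : ℕ) + 1, by omega⟩ : Fin n) = i := by
        apply Fin.ext; simp only [Fin.val_mk]; exact h1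
      rw [h3]
      simp
    apply Submodule.subset_span
    exact ⟨e n z, e n j, Submodule.subset_span ⟨j, by simp only [hjdef, Fin.val_mk]; omega, rfl⟩,
      hbe.symm⟩

end main

/-- the `n`-dimensional complex algebra with basis `e₁, ..., e_n` and
products `[e_i, e_j] = C(i+j-1, j) e_{i+j}` for `2 ≤ i+j ≤ n` (zero otherwise) is a
Zinbiel algebra, and its lower central series satisfies
`Z^k = span{e_k, ..., e_n}` for `2 ≤ k ≤ n`. (Indices in the table are 1-based; the
`Fin n` indices are 0-based.) -/
theorem stmt12 (n : ℕ) (b : (Fin n → ℂ) →ₗ[ℂ] (Fin n → ℂ) →ₗ[ℂ] (Fin n → ℂ))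
    (htable : ∀ i j : Fin n, b (e n i) (e n j) =
      if h : (i : ℕ) + (j : ℕ) + 2 ≤ n then
        ((Nat.choose ((i : ℕ) + (j : ℕ) + 1) ((j : ℕ) + 1) : ℂ)) •
          e n ⟨(i : ℕ) + (j : ℕ) + 1, by omega⟩
      else 0) :
    (∀ x y z : Fin n → ℂ, b (b x y) z = b x (b y z) + b x (b z y)) ∧
    (∀ k : ℕ, 2 ≤ k → k ≤ n →
      lcs b (k - 1) =
        Submodule.span ℂ {w | ∃ i : Fin n, k ≤ (i : ℕ) + 1 ∧ w = e n i}) := by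
  constructor
  · exact zinbiel n b htable
  · have main : ∀ m : ℕ, lcs b m =
        Submodule.span ℂ {w | ∃ i : Fin n, m + 1 ≤ (i : ℕ) + 1 ∧ w = e n i} := by
      intro m
      induction m with
      | zero =>
        show (⊤ : Submodule ℂ _) = _
        exact (span_T_one n).symm
      | succ m ih =>
        show Submodule.span ℂ {w | ∃ x : Fin n → ℂ, ∃ y ∈ lcs b m, w = b x y} = _
        rw [ih]
        exact step_lemma n b htable m
    intro k hk2 hkn
    have := main (k - 1)
    rw [show k - 1 + 1 = k from by omega] at this
    exact this
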